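/- arXiv:2510.00643 — 5 statements merged into one kernel-verified Lean document; each statement's English description precedes it below -/
import Mathlib

section
/- Let {A^k}_{k>=0} and {B^k}_{k>=0} be nonnegative real sequences satisfying A^{k+1} <= (1 + a_1) A^k - B^k + a_2 for all k, where a_1, a_2 >= 0. Then for every K >= 0, min_{k=0,...,K} B^k <= exp(a_1 (K+1)) / (K+1) * A^0 + a_2. -/
theorem stmt_1 (A B : ℕ → ℝ) (a1 a2 : ℝ) (ha1 : 0 ≤ a1) (ha2 : 0 ≤ a2)
    (hA : ∀ k, 0 ≤ A k) (hB : ∀ k, 0 ≤ B k)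
    (hrec : ∀ k, A (k + 1) ≤ (1 + a1) * A k - B k + a2) :
    ∀ K : ℕ, ∃ k ≤ K, B k ≤ Real.exp (a1 * (K + 1)) / (K + 1) * A 0 + a2 := by
  intro K
  by_contra h
  push_neg at h
  set c := Real.exp (a1 * (K + 1)) / (K + 1) * A 0 with hc
  have hKpos : (0 : ℝ) < (K : ℝ) + 1 := by positivity
  have hc0 : 0 ≤ c := by
    have := hA 0
    positivity
  have hstep : ∀ k, k ≤ K → A (k + 1) < (1 + a1) * A k - c := by
    intro k hk
    have h1 := hrec k
    have h2 := h k hk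
    linarith
  have claim : ∀ k, k ≤ K → A (k + 1) < (1 + a1) ^ (k + 1) * A 0 - (k + 1 : ℝ) * c := by
    intro k hk
    induction k with
    | zero =>
      have := hstep 0 (Nat.zero_le _)
      push_cast
      simpa [pow_one] using this
    | succ n ih =>
      have hn : n ≤ K := Nat.le_of_succ_le hk
      have h1 := hstep (n + 1) hk
      have h2 := ih hn
      have h3 : (1 + a1) * A (n + 1) ≤
          (1 + a1) * ((1 + a1) ^ (n + 1) * A 0 - ((n : ℝ) + 1) * c) :=
        mul_le_mul_of_nonneg_left h2.le (by linarith)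
      have h4 : (1 + a1) * ((1 + a1) ^ (n + 1) * A 0 - ((n : ℝ) + 1) * c) - c ≤
          (1 + a1) ^ (n + 2) * A 0 - ((n : ℝ) + 2) * c := by
        have hnn : (0 : ℝ) ≤ (n : ℝ) + 1 := by positivity
        have hp : (1 + a1) ^ (n + 2) = (1 + a1) * (1 + a1) ^ (n + 1) := by ring
        rw [hp]
        nlinarith [mul_nonneg (mul_nonneg ha1 hnn) hc0]
      push_cast
      push_cast at h1 h3 h4
      nlinarith
  have hfin := claim K le_rfl
  have hpow : (1 + a1) ^ (K + 1) ≤ Real.exp (a1 * (K + 1)) := by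
    have h1 : 1 + a1 ≤ Real.exp a1 := by
      have := Real.add_one_le_exp a1
      linarith
    have h2 : (1 + a1) ^ (K + 1) ≤ (Real.exp a1) ^ (K + 1) :=
      pow_le_pow_left₀ (by linarith) h1 _
    calc (1 + a1) ^ (K + 1) ≤ (Real.exp a1) ^ (K + 1) := h2
      _ = Real.exp (a1 * (K + 1)) := by
          rw [← Real.exp_nat_mul]; congr 1; push_cast; ring
  have hmul : ((K : ℝ) + 1) * c = Real.exp (a1 * (K + 1)) * A 0 := by
    rw [hc]; field_simp
  have hpowA : (1 + a1) ^ (K + 1) * A 0 ≤ Real.exp (a1 * (K + 1)) * A 0 :=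
    mul_le_mul_of_nonneg_right hpow (hA 0)
  have := hA (K + 1)
  push_cast at hfin
  nlinarith
end

section
/- Suppose f : S -> R is differentiable, bounded below by f*, and satisfies the quadratic upper bound |f(Y) - f(X) - <grad f(X), Y - X>| <= (L0 + L1 ||grad f(X)||_*) / 2 * ||X - Y||^2 for all X, Y, where L0, L1 > 0. Then for every X, ||grad f(X)||_*^2 / (2 (L0 + L1 ||grad f(X)||_*)) <= f(X) - f*. -/
/-!
Moving from `X` a step `s = G / (L0 + L1 G)` along any direction `Z` of the unit ball of `N`
(where `G` is the dual norm of `∇f(X)`) lowers the quadratic upper model of `f` by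
`s ⟪∇f(X), Z⟫ - (L0 + L1 G) s² / 2`, and `f` never drops below `f*`. Taking the supremum over
`Z` turns `⟪∇f(X), Z⟫` into `G`, and the chosen step makes the decrease exactly
`G² / (2 (L0 + L1 G))`.
-/

open scoped RealInnerProductSpace

open Pointwise in
theorem Real.mul_sSup_le {A : Set ℝ} {c a : ℝ} (hc : 0 ≤ c) (ha : 0 ≤ a)
    (h : ∀ x ∈ A, c * x ≤ a) : c * sSup A ≤ a := by
  rw [← smul_eq_mul, ← Real.sSup_smul_of_nonneg hc]
  refine Real.sSup_le ?_ ha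
  rintro _ ⟨x, hx, rfl⟩
  exact h x hx

section DescentStep

variable {E : Type*} [NormedAddCommGroup E] [InnerProductSpace ℝ E]
  {p : Seminorm ℝ E} {f : E → ℝ} {fstar D : ℝ} {X g : E}

theorem mul_inner_le_sub_add_of_quadratic_upper_bound (hD : 0 ≤ D) (hlow : ∀ Y, fstar ≤ f Y)
    (hquad : ∀ Y, f Y - f X - ⟪g, Y - X⟫ ≤ D / 2 * p (X - Y) ^ 2)
    {Z : E} (hZ : p Z ≤ 1) {s : ℝ} (hs : 0 ≤ s) :
    s * ⟪g, Z⟫ ≤ f X - fstar + D / 2 * s ^ 2 := by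
  have hstep := hquad (X - s • Z)
  rw [sub_sub_cancel, sub_sub_cancel_left, inner_neg_right, real_inner_smul_right, map_smul_eq_mul,
    Real.norm_of_nonneg hs] at hstep
  have hpZ : (s * p Z) ^ 2 ≤ s ^ 2 := by
    rw [mul_pow]
    exact mul_le_of_le_one_right (sq_nonneg s) (pow_le_one₀ (apply_nonneg p Z) hZ)
  nlinarith [hlow (X - s • Z), mul_le_mul_of_nonneg_left hpZ hD]

theorem mul_sSup_inner_le_sub_add_of_quadratic_upper_bound (hD : 0 ≤ D)
    (hlow : ∀ Y, fstar ≤ f Y) (hquad : ∀ Y, f Y - f X - ⟪g, Y - X⟫ ≤ D / 2 * p (X - Y) ^ 2)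
    {s : ℝ} (hs : 0 ≤ s) :
    s * sSup ((fun Z => ⟪g, Z⟫) '' {Z | p Z ≤ 1}) ≤ f X - fstar + D / 2 * s ^ 2 := by
  refine Real.mul_sSup_le hs (by nlinarith [hlow X]) ?_
  rintro _ ⟨Z, hZ, rfl⟩
  exact mul_inner_le_sub_add_of_quadratic_upper_bound hD hlow hquad hZ hs

end DescentStep

theorem stmt_13_general {S : Type*} [NormedAddCommGroup S] [InnerProductSpace ℝ S]
    [CompleteSpace S]
    (N : S → ℝ)
    (hN_add : ∀ x y, N (x + y) ≤ N x + N y)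
    (hN_smul : ∀ (c : ℝ) x, N (c • x) = |c| * N x)
    (Nd : S → ℝ)
    (hNd : ∀ X, Nd X = sSup ((fun Z => ⟪X, Z⟫) '' {Z | N Z ≤ 1}))
    (f : S → ℝ)
    (L0 L1 fstar : ℝ) (hL0 : 0 < L0) (hL1 : 0 < L1)
    (hlow : ∀ X, fstar ≤ f X)
    (hquad : ∀ X Y, |f Y - f X - ⟪gradient f X, Y - X⟫| ≤
      (L0 + L1 * Nd (gradient f X)) / 2 * (N (X - Y)) ^ 2) :
    ∀ X, (Nd (gradient f X)) ^ 2 / (2 * (L0 + L1 * Nd (gradient f X))) ≤ f X - fstar := by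
  intro X
  let p : Seminorm ℝ S := .of N hN_add fun c x => by rw [hN_smul, Real.norm_eq_abs]
  set G := Nd (gradient f X)
  have hG_def : G = sSup ((fun Z => ⟪gradient f X, Z⟫) '' {Z | p Z ≤ 1}) := hNd _
  have hG : 0 ≤ G := hG_def ▸ Real.sSup_nonneg' ⟨0, ⟨0, by simp, inner_zero_right _⟩, le_rfl⟩
  set D := L0 + L1 * G
  have hD : 0 < D := by positivity
  have hdecrease := mul_sSup_inner_le_sub_add_of_quadratic_upper_bound (p := p) hD.le hlow
    (fun Y => (le_abs_self _).trans (hquad X Y)) (div_nonneg hG hD.le)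
  rw [← hG_def] at hdecrease
  have hstep : G ^ 2 / (2 * D) = G / D * G - D / 2 * (G / D) ^ 2 := by
    field_simp
    ring
  linarith

theorem stmt_13 {S : Type*} [NormedAddCommGroup S] [InnerProductSpace ℝ S]
    [FiniteDimensional ℝ S] [CompleteSpace S]
    (N : S → ℝ)
    (hN_add : ∀ x y, N (x + y) ≤ N x + N y)
    (hN_smul : ∀ (c : ℝ) x, N (c • x) = |c| * N x)
    (hN_zero : ∀ x, N x = 0 ↔ x = 0)
    (Nd : S → ℝ)
    (hNd : ∀ X, Nd X = sSup ((fun Z => ⟪X, Z⟫) '' {Z | N Z ≤ 1}))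
    (f : S → ℝ) (hf : Differentiable ℝ f)
    (L0 L1 fstar : ℝ) (hL0 : 0 < L0) (hL1 : 0 < L1)
    (hlow : ∀ X, fstar ≤ f X)
    (hquad : ∀ X Y, |f Y - f X - ⟪gradient f X, Y - X⟫| ≤
      (L0 + L1 * Nd (gradient f X)) / 2 * (N (X - Y)) ^ 2) :
    ∀ X, (Nd (gradient f X)) ^ 2 / (2 * (L0 + L1 * Nd (gradient f X))) ≤ f X - fstar :=
  stmt_13_general N hN_add hN_smul Nd hNd f L0 L1 fstar hL0 hL1 hlow hquad
end

section
/- Suppose f : S -> R is differentiable, bounded below by f*, and satisfies ||grad f(X)||_*^2 / (2 (L0 + L1 ||grad f(X)||_*)) <= f(X) - f* for all X, where L0, L1 > 0. Then for every X, ||grad f(X)||_* <= 4 L1 (f(X) - f*) + L0 / L1. -/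
open scoped RealInnerProductSpace

theorem stmt_14 {S : Type*} [NormedAddCommGroup S] [InnerProductSpace ℝ S]
    [FiniteDimensional ℝ S] [CompleteSpace S]
    (N : S → ℝ)
    (hN_add : ∀ x y, N (x + y) ≤ N x + N y)
    (hN_smul : ∀ (c : ℝ) x, N (c • x) = |c| * N x)
    (hN_zero : ∀ x, N x = 0 ↔ x = 0)
    (Nd : S → ℝ)
    (hNd : ∀ X, Nd X = sSup ((fun Z => ⟪X, Z⟫) '' {Z | N Z ≤ 1}))
    (f : S → ℝ) (hf : Differentiable ℝ f)
    (L0 L1 fstar : ℝ) (hL0 : 0 < L0) (hL1 : 0 < L1)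
    (hlow : ∀ X, fstar ≤ f X)
    (hkey : ∀ X, (Nd (gradient f X)) ^ 2 / (2 * (L0 + L1 * Nd (gradient f X))) ≤ f X - fstar) :
    ∀ X, Nd (gradient f X) ≤ 4 * L1 * (f X - fstar) + L0 / L1 := by
  intro X
  have hg0 : 0 ≤ Nd (gradient f X) := by
    rw [hNd]
    apply Real.sSup_nonneg'
    have hN0 : N 0 ≤ 1 := by rw [(hN_zero 0).mpr rfl]; norm_num
    exact ⟨0, ⟨0, hN0, by simp⟩, le_refl 0⟩
  obtain ⟨g, hg⟩ : ∃ g, g = Nd (gradient f X) := ⟨_, rfl⟩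
  obtain ⟨Δ, hΔ⟩ : ∃ d, d = f X - fstar := ⟨_, rfl⟩
  rw [← hg] at hg0
  rw [← hg, ← hΔ]
  have hΔ0 : 0 ≤ Δ := by rw [hΔ]; linarith [hlow X]
  have hden : 0 < 2 * (L0 + L1 * g) := by positivity
  have hk : g ^ 2 ≤ 2 * (L0 + L1 * g) * Δ := by
    have h := hkey X
    rw [← hg, ← hΔ, div_le_iff₀ hden] at h
    linarith
  have hL01 : 0 ≤ L0 / L1 := by positivity
  have hmul : 0 ≤ 4 * L1 * Δ := by positivity
  by_cases hc : L1 * g ≤ L0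
  · have : g ≤ L0 / L1 := by rw [le_div_iff₀ hL1]; linarith
    linarith
  · push_neg at hc
    have hgpos : 0 < g := by nlinarith
    have h4 : g ^ 2 ≤ 4 * L1 * Δ * g := by nlinarith
    have : g ≤ 4 * L1 * Δ := by nlinarith
    linarith
end

section
/- Let f : S -> R be differentiable and satisfy the quadratic upper bound f(Y) <= f(X) + <grad f(X), Y - X> + (L0 + L1 ||grad f(X)||_*) / 2 * ||X - Y||^2 for all X, Y, with L0, L1 >= 0. Let X^{k+1} be a minimizer of Z -> <G, Z> over the ball B(X^k, t) = {Z : ||Z - X^k|| <= t}, where t > 0 and G is arbitrary. Then f(X^{k+1}) <= f(X^k) + 2 t ||grad f(X^k) - G||_* - t ||grad f(X^k)||_* + (L0 + L1 ||grad f(X^k)||_*) / 2 * t^2. -/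
/-!
Testing the minimality of `X1` against the competitors `X0 - t • Z` with `N Z ≤ 1` gives
`⟪G, X1 - X0⟫ ≤ -t ‖G‖_*`. Splitting `∇f(X0) = (∇f(X0) - G) + G`, the generalized Cauchy–Schwarz
inequality and `‖∇f(X0)‖_* ≤ ‖∇f(X0) - G‖_* + ‖G‖_*` bound the linear term of the quadratic upper
bound by `2t ‖∇f(X0) - G‖_* - t ‖∇f(X0)‖_*`, and `‖X1 - X0‖ ≤ t` bounds the quadratic term.
In finite dimension `N` dominates a multiple of the inner-product norm, so the supremum defining
`‖·‖_*` is taken over a bounded set and is not a junk value.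
-/

open scoped RealInnerProductSpace

def SeminormSynonym (E : Type*) : Type _ := E

theorem Seminorm.exists_norm_le_mul {E : Type*} [NormedAddCommGroup E] [NormedSpace ℝ E]
    [FiniteDimensional ℝ E] (p : Seminorm ℝ E) (hp : ∀ x, p x = 0 → x = 0) :
    ∃ C, 0 < C ∧ ∀ x : E, ‖x‖ ≤ C * p x := by
  let : AddCommGroup (SeminormSynonym E) := inferInstanceAs (AddCommGroup E)
  let : Module ℝ (SeminormSynonym E) := inferInstanceAs (Module ℝ E)
  let : NormedAddCommGroup (SeminormSynonym E) :=
    AddGroupNorm.toNormedAddCommGroup { p.toAddGroupSeminorm with eq_zero_of_map_eq_zero' := hp }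
  let : NormedSpace ℝ (SeminormSynonym E) := ⟨fun c x => (map_smul_eq_mul p c x).le⟩
  let : FiniteDimensional ℝ (SeminormSynonym E) := inferInstanceAs (FiniteDimensional ℝ E)
  let id : SeminormSynonym E →ₗ[ℝ] E := LinearMap.id
  exact SemilinearMapClass.bound_of_continuous id id.continuous_of_finiteDimensional

namespace Seminorm

variable {S : Type*} [NormedAddCommGroup S] [InnerProductSpace ℝ S]

noncomputable def dual (p : Seminorm ℝ S) (X : S) : ℝ := sSup ((fun Z => ⟪X, Z⟫) '' {Z | p Z ≤ 1})

theorem inner_sub_le_neg_mul_dual_of_minimizer {p : Seminorm ℝ S} {G X0 X1 : S} {t : ℝ}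
    (ht : 0 < t) (hmin : ∀ Z, p (Z - X0) ≤ t → ⟪G, X1⟫ ≤ ⟪G, Z⟫) :
    ⟪G, X1 - X0⟫ ≤ -t * p.dual G := by
  suffices p.dual G ≤ ⟪G, X0 - X1⟫ / t by
    rw [le_div_iff₀ ht] at this
    rw [← neg_sub, inner_neg_right]
    linarith
  refine csSup_le ⟨0, 0, by simp, inner_zero_right _⟩ ?_
  rintro _ ⟨Z, hZ, rfl⟩
  have hball : p ((X0 - t • Z) - X0) ≤ t := by
    rw [sub_sub_cancel_left, map_neg_eq_map, map_smul_eq_mul, Real.norm_eq_abs, abs_of_pos ht]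
    exact mul_le_of_le_one_right ht.le hZ
  have := hmin _ hball
  rw [inner_sub_right, real_inner_smul_right] at this
  rw [le_div_iff₀ ht, inner_sub_right]
  linarith

variable [FiniteDimensional ℝ S] {p : Seminorm ℝ S}

theorem bddAbove_inner_image_unitBall (hp : ∀ x, p x = 0 → x = 0) (X : S) :
    BddAbove ((fun Z => ⟪X, Z⟫) '' {Z | p Z ≤ 1}) := by
  obtain ⟨C, hC0, hC⟩ := p.exists_norm_le_mul hp
  refine ⟨‖X‖ * C, ?_⟩
  rintro _ ⟨Z, hZ, rfl⟩
  calc ⟪X, Z⟫ ≤ ‖X‖ * ‖Z‖ := real_inner_le_norm X Z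
    _ ≤ ‖X‖ * (C * p Z) := by gcongr; exact hC Z
    _ ≤ ‖X‖ * C := by gcongr; exact mul_le_of_le_one_right hC0.le hZ

theorem inner_le_dual (hp : ∀ x, p x = 0 → x = 0) {X Z : S} (hZ : p Z ≤ 1) :
    ⟪X, Z⟫ ≤ p.dual X :=
  le_csSup (bddAbove_inner_image_unitBall hp X) ⟨Z, hZ, rfl⟩

theorem dual_nonneg (hp : ∀ x, p x = 0 → x = 0) (X : S) : 0 ≤ p.dual X := by
  simpa using inner_le_dual hp (X := X) (Z := 0) (by simp)

theorem inner_le_dual_mul (hp : ∀ x, p x = 0 → x = 0) (X Z : S) : ⟪X, Z⟫ ≤ p.dual X * p Z := by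
  rcases (apply_nonneg p Z).eq_or_lt with hZ | hZ
  · simp [hp Z hZ.symm]
  · have hunit : p ((p Z)⁻¹ • Z) ≤ 1 := by
      rw [map_smul_eq_mul, Real.norm_eq_abs, abs_inv, abs_of_pos hZ, inv_mul_cancel₀ hZ.ne']
    have := inner_le_dual hp (X := X) hunit
    rw [real_inner_smul_right, inv_mul_le_iff₀ hZ] at this
    linarith

theorem dual_add_le (hp : ∀ x, p x = 0 → x = 0) (A B : S) :
    p.dual (A + B) ≤ p.dual A + p.dual B := by
  refine csSup_le ⟨0, 0, by simp, inner_zero_right _⟩ ?_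
  rintro _ ⟨Z, hZ, rfl⟩
  exact (inner_add_left A B Z).trans_le <| add_le_add (inner_le_dual hp hZ) (inner_le_dual hp hZ)

theorem inner_sub_le_of_minimizer (hp : ∀ x, p x = 0 → x = 0) {g G X0 X1 : S} {t : ℝ}
    (ht : 0 < t) (hball : p (X1 - X0) ≤ t) (hmin : ∀ Z, p (Z - X0) ≤ t → ⟪G, X1⟫ ≤ ⟪G, Z⟫) :
    ⟪g, X1 - X0⟫ ≤ 2 * t * p.dual (g - G) - t * p.dual g := by
  have htri : t * p.dual g ≤ t * (p.dual (g - G) + p.dual G) := by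
    gcongr
    simpa using dual_add_le hp (g - G) G
  calc ⟪g, X1 - X0⟫ = ⟪g - G, X1 - X0⟫ + ⟪G, X1 - X0⟫ := by
        rw [← inner_add_left, sub_add_cancel]
    _ ≤ p.dual (g - G) * t + -t * p.dual G := by
        gcongr
        · calc ⟪g - G, X1 - X0⟫ ≤ p.dual (g - G) * p (X1 - X0) := inner_le_dual_mul hp _ _
            _ ≤ p.dual (g - G) * t := by gcongr; exact dual_nonneg hp _
        · exact inner_sub_le_neg_mul_dual_of_minimizer ht hmin
    _ ≤ 2 * t * p.dual (g - G) - t * p.dual g := by linarith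

end Seminorm

theorem stmt_15_general {S : Type*} [NormedAddCommGroup S] [InnerProductSpace ℝ S]
    [FiniteDimensional ℝ S]
    (N : S → ℝ)
    (hN_add : ∀ x y, N (x + y) ≤ N x + N y)
    (hN_smul : ∀ (c : ℝ) x, N (c • x) = |c| * N x)
    (hN_zero : ∀ x, N x = 0 ↔ x = 0)
    (Nd : S → ℝ)
    (hNd : ∀ X, Nd X = sSup ((fun Z => ⟪X, Z⟫) '' {Z | N Z ≤ 1}))
    (f : S → ℝ)
    (L0 L1 : ℝ) (hL0 : 0 ≤ L0) (hL1 : 0 ≤ L1)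
    (hquad : ∀ X Y, f Y ≤ f X + ⟪gradient f X, Y - X⟫ +
      (L0 + L1 * Nd (gradient f X)) / 2 * (N (X - Y)) ^ 2)
    (G X0 X1 : S) (t : ℝ) (ht : 0 < t)
    (hball : N (X1 - X0) ≤ t)
    (hmin : ∀ Z, N (Z - X0) ≤ t → ⟪G, X1⟫ ≤ ⟪G, Z⟫) :
    f X1 ≤ f X0 + 2 * t * Nd (gradient f X0 - G) - t * Nd (gradient f X0) +
      (L0 + L1 * Nd (gradient f X0)) / 2 * t ^ 2 := by
  let p : Seminorm ℝ S := Seminorm.of N hN_add fun c x => by rw [hN_smul, Real.norm_eq_abs]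
  have hp : ∀ x, p x = 0 → x = 0 := fun x => (hN_zero x).1
  obtain rfl : Nd = p.dual := funext hNd
  have hstep := Seminorm.inner_sub_le_of_minimizer hp (g := gradient f X0) ht hball hmin
  have hdist : p (X0 - X1) ^ 2 ≤ t ^ 2 := by
    rw [map_sub_rev]
    exact pow_le_pow_left₀ (apply_nonneg p _) hball 2
  have hcoef : 0 ≤ (L0 + L1 * p.dual (gradient f X0)) / 2 := by
    have := Seminorm.dual_nonneg hp (gradient f X0)
    positivity
  calc f X1 ≤ f X0 + ⟪gradient f X0, X1 - X0⟫
        + (L0 + L1 * p.dual (gradient f X0)) / 2 * p (X0 - X1) ^ 2 := hquad X0 X1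
    _ ≤ _ := by gcongr; linarith

theorem stmt_15 {S : Type*} [NormedAddCommGroup S] [InnerProductSpace ℝ S]
    [FiniteDimensional ℝ S] [CompleteSpace S]
    (N : S → ℝ)
    (hN_add : ∀ x y, N (x + y) ≤ N x + N y)
    (hN_smul : ∀ (c : ℝ) x, N (c • x) = |c| * N x)
    (hN_zero : ∀ x, N x = 0 ↔ x = 0)
    (Nd : S → ℝ)
    (hNd : ∀ X, Nd X = sSup ((fun Z => ⟪X, Z⟫) '' {Z | N Z ≤ 1}))
    (f : S → ℝ) (hf : Differentiable ℝ f)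
    (L0 L1 : ℝ) (hL0 : 0 ≤ L0) (hL1 : 0 ≤ L1)
    (hquad : ∀ X Y, f Y ≤ f X + ⟪gradient f X, Y - X⟫ +
      (L0 + L1 * Nd (gradient f X)) / 2 * (N (X - Y)) ^ 2)
    (G X0 X1 : S) (t : ℝ) (ht : 0 < t)
    (hball : N (X1 - X0) ≤ t)
    (hmin : ∀ Z, N (Z - X0) ≤ t → ⟪G, X1⟫ ≤ ⟪G, Z⟫) :
    f X1 ≤ f X0 + 2 * t * Nd (gradient f X0 - G) - t * Nd (gradient f X0) +
      (L0 + L1 * Nd (gradient f X0)) / 2 * t ^ 2 :=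
  stmt_15_general N hN_add hN_smul hN_zero Nd hNd f L0 L1 hL0 hL1 hquad G X0 X1 t ht hball hmin
end

section
/- Let f : S -> R be differentiable with L-smoothness quadratic bound f(Y) <= f(X) + <grad f(X), Y - X> + (L/2)||X - Y||^2 for all X, Y. Consider the update X^{k+1} = X^k - gamma * G^sharp where gamma > 0 and G^sharp satisfies <G, G^sharp> = ||G^sharp||^2 and ||G^sharp|| = ||G||_*. Then f(X^{k+1}) <= f(X^k) + (3 gamma / 2) ||grad f(X^k) - G||_*^2 - (gamma / 4) ||grad f(X^k)||_*^2 - (1/(4 gamma) - L/2) gamma^2 ||G||_*^2. -/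
/-!
The smoothness bound at `X1 = X0 - γ G♯` gives `f X1 ≤ f X0 - γ ⟪∇f, G♯⟫ + L γ² ‖G‖²_* / 2`, and
`⟪∇f, G♯⟫ = ‖G‖²_* + ⟪∇f - G, G♯⟫ ≥ ‖G‖²_* - ‖∇f - G‖_* ‖G‖_*` by the sharp-operator identities
and Hölder's inequality for the dual norm. Together with `‖∇f‖_* ≤ ‖∇f - G‖_* + ‖G‖_*` the claim
reduces to a positive definite quadratic form in `‖∇f - G‖_*` and `‖G‖_*`.

The dual norm is a supremum, so Hölder's and the triangle inequality for it need the set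
`{⟪X, Z⟫ | N Z ≤ 1}` to be bounded above; this holds because in finite dimensions `N` dominates a
multiple of the Euclidean norm (minimize `N` over the compact unit sphere).
-/

open scoped RealInnerProductSpace

namespace Seminorm

section FiniteDimensional

variable {E : Type*} [NormedAddCommGroup E] [NormedSpace ℝ E] [FiniteDimensional ℝ E]

theorem exists_pos_mul_norm_le (p : Seminorm ℝ E) (hp : ∀ x, p x = 0 → x = 0) :
    ∃ m > 0, ∀ x, m * ‖x‖ ≤ p x := by
  cases subsingleton_or_nontrivial E with
  | inl _ => exact ⟨1, one_pos, fun x => by simp [Subsingleton.elim x 0]⟩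
  | inr _ =>
    obtain ⟨w, hw, hw_min⟩ := (isCompact_sphere (0 : E) 1).exists_isMinOn
      (NormedSpace.sphere_nonempty.2 zero_le_one) p.convexOn.locallyLipschitz.continuous.continuousOn
    have hw0 : w ≠ 0 := ne_zero_of_mem_unit_sphere ⟨w, hw⟩
    refine ⟨p w, (apply_nonneg p w).lt_of_ne fun h => hw0 (hp w h.symm), fun x => ?_⟩
    rcases eq_or_ne x 0 with rfl | hx
    · simp
    have hx' : 0 < ‖x‖ := norm_pos_iff.2 hx
    have hmem : ‖x‖⁻¹ • x ∈ Metric.sphere (0 : E) 1 := by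
      simp [norm_smul, hx'.ne']
    have : p w ≤ p (‖x‖⁻¹ • x) := hw_min hmem
    rw [map_smul_eq_mul, norm_inv, norm_norm] at this
    calc p w * ‖x‖ ≤ ‖x‖⁻¹ * p x * ‖x‖ := by gcongr
      _ = p x := by field_simp

end FiniteDimensional

section InnerDual

variable {E : Type*} [NormedAddCommGroup E] [InnerProductSpace ℝ E]

noncomputable def innerDual (p : Seminorm ℝ E) (X : E) : ℝ :=
  sSup ((fun Z => ⟪X, Z⟫) '' {Z | p Z ≤ 1})

variable [FiniteDimensional ℝ E] {p : Seminorm ℝ E}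

theorem bddAbove_inner_image_le_one (hp : ∀ x, p x = 0 → x = 0) (X : E) :
    BddAbove ((fun Z => ⟪X, Z⟫) '' {Z | p Z ≤ 1}) := by
  obtain ⟨m, hm, hm_le⟩ := p.exists_pos_mul_norm_le hp
  refine ⟨‖X‖ * m⁻¹, ?_⟩
  rintro _ ⟨Z, hZ : p Z ≤ 1, rfl⟩
  have hZ_norm : ‖Z‖ ≤ m⁻¹ := by
    rw [← mul_le_mul_iff_right₀ hm, mul_inv_cancel₀ hm.ne']
    exact (hm_le Z).trans hZ
  calc ⟪X, Z⟫ ≤ ‖X‖ * ‖Z‖ := real_inner_le_norm X Z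
    _ ≤ ‖X‖ * m⁻¹ := by gcongr

theorem innerDual_nonneg (hp : ∀ x, p x = 0 → x = 0) (X : E) : 0 ≤ p.innerDual X :=
  le_csSup (bddAbove_inner_image_le_one hp X) ⟨0, by simp, inner_zero_right X⟩

theorem inner_le_innerDual_mul (hp : ∀ x, p x = 0 → x = 0) (X Z : E) :
    ⟪X, Z⟫ ≤ p.innerDual X * p Z := by
  rcases eq_or_ne Z 0 with rfl | hZ
  · simp
  have hpZ : 0 < p Z := (apply_nonneg p Z).lt_of_ne fun h => hZ (hp Z h.symm)
  have hmem : ⟪X, (p Z)⁻¹ • Z⟫ ∈ (fun Z => ⟪X, Z⟫) '' {Z | p Z ≤ 1} :=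
    ⟨(p Z)⁻¹ • Z, by
      show p _ ≤ 1
      rw [map_smul_eq_mul, norm_inv, Real.norm_of_nonneg hpZ.le, inv_mul_cancel₀ hpZ.ne'], rfl⟩
  have := le_csSup (bddAbove_inner_image_le_one hp X) hmem
  rw [real_inner_smul_right, inv_mul_le_iff₀ hpZ] at this
  simpa only [innerDual, mul_comm] using this

theorem innerDual_add_le (hp : ∀ x, p x = 0 → x = 0) (X Y : E) :
    p.innerDual (X + Y) ≤ p.innerDual X + p.innerDual Y := by
  refine csSup_le ⟨0, 0, by simp, inner_zero_right _⟩ ?_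
  rintro _ ⟨Z, hZ : p Z ≤ 1, rfl⟩
  have hX := inner_le_innerDual_mul hp X Z
  have hY := inner_le_innerDual_mul hp Y Z
  show ⟪X + Y, Z⟫ ≤ _
  rw [inner_add_left]
  nlinarith [innerDual_nonneg hp X, innerDual_nonneg hp Y]

end InnerDual

end Seminorm

theorem stmt_16_general {S : Type*} [NormedAddCommGroup S] [InnerProductSpace ℝ S]
    [FiniteDimensional ℝ S]
    (N : S → ℝ)
    (hN_add : ∀ x y, N (x + y) ≤ N x + N y)
    (hN_smul : ∀ (c : ℝ) x, N (c • x) = |c| * N x)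
    (hN_zero : ∀ x, N x = 0 ↔ x = 0)
    (Nd : S → ℝ)
    (hNd : ∀ X, Nd X = sSup ((fun Z => ⟪X, Z⟫) '' {Z | N Z ≤ 1}))
    (f : S → ℝ)
    (L : ℝ)
    (hquad : ∀ X Y, f Y ≤ f X + ⟪gradient f X, Y - X⟫ + L / 2 * (N (X - Y)) ^ 2)
    (G Gs : S)
    (hsharp_inner : ⟪G, Gs⟫ = (N Gs) ^ 2)
    (hsharp_norm : N Gs = Nd G)
    (γ : ℝ) (hγ : 0 < γ)
    (X0 X1 : S) (hX1 : X1 = X0 - γ • Gs) :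
    f X1 ≤ f X0 + 3 * γ / 2 * (Nd (gradient f X0 - G)) ^ 2 -
      γ / 4 * (Nd (gradient f X0)) ^ 2 - (1 / (4 * γ) - L / 2) * γ ^ 2 * (Nd G) ^ 2 := by
  let p : Seminorm ℝ S := .of N hN_add fun c x => by rw [hN_smul, Real.norm_eq_abs]
  have hp : ∀ x, p x = 0 → x = 0 := fun x => (hN_zero x).1
  obtain rfl : Nd = p.innerDual := funext hNd
  subst hX1
  have hstep := hquad X0 (X0 - γ • Gs)
  set g := gradient f X0
  rw [sub_sub_cancel, sub_sub_cancel_left, inner_neg_right, real_inner_smul_right, hN_smul,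
    abs_of_pos hγ, hsharp_norm] at hstep
  set d := p.innerDual (g - G)
  set a := p.innerDual G
  have hinner : a ^ 2 - d * a ≤ ⟪g, Gs⟫ := by
    have hGs : p Gs = a := hsharp_norm
    have := p.inner_le_innerDual_mul hp (g - G) (-Gs)
    rw [inner_neg_right, map_neg_eq_map, hGs, inner_sub_left, hsharp_inner, hsharp_norm] at this
    linarith
  have htri : p.innerDual g ≤ d + a := by
    simpa using p.innerDual_add_le hp (g - G) G
  have hn2 : p.innerDual g ^ 2 ≤ (d + a) ^ 2 := pow_le_pow_left₀ (p.innerDual_nonneg hp g) htri 2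
  have hγL : (1 / (4 * γ) - L / 2) * γ ^ 2 = γ / 4 - L / 2 * γ ^ 2 := by field_simp
  rw [hγL]
  -- what remains is `0 ≤ γ (5d² - 6da + 2a²) / 4`, and `5(5d² - 6da + 2a²) = (5d - 3a)² + a²`
  nlinarith [mul_le_mul_of_nonneg_left hinner hγ.le, mul_le_mul_of_nonneg_left hn2 hγ.le,
    mul_nonneg hγ.le (sq_nonneg (5 * d - 3 * a)), mul_nonneg hγ.le (sq_nonneg a)]

theorem stmt_16 {S : Type*} [NormedAddCommGroup S] [InnerProductSpace ℝ S]
    [FiniteDimensional ℝ S] [CompleteSpace S]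
    (N : S → ℝ)
    (hN_add : ∀ x y, N (x + y) ≤ N x + N y)
    (hN_smul : ∀ (c : ℝ) x, N (c • x) = |c| * N x)
    (hN_zero : ∀ x, N x = 0 ↔ x = 0)
    (Nd : S → ℝ)
    (hNd : ∀ X, Nd X = sSup ((fun Z => ⟪X, Z⟫) '' {Z | N Z ≤ 1}))
    (f : S → ℝ) (hf : Differentiable ℝ f)
    (L : ℝ) (hL : 0 < L)
    (hquad : ∀ X Y, f Y ≤ f X + ⟪gradient f X, Y - X⟫ + L / 2 * (N (X - Y)) ^ 2)
    (G Gs : S)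
    (hsharp_inner : ⟪G, Gs⟫ = (N Gs) ^ 2)
    (hsharp_norm : N Gs = Nd G)
    (γ : ℝ) (hγ : 0 < γ)
    (X0 X1 : S) (hX1 : X1 = X0 - γ • Gs) :
    f X1 ≤ f X0 + 3 * γ / 2 * (Nd (gradient f X0 - G)) ^ 2 -
      γ / 4 * (Nd (gradient f X0)) ^ 2 - (1 / (4 * γ) - L / 2) * γ ^ 2 * (Nd G) ^ 2 :=
  stmt_16_general N hN_add hN_smul hN_zero Nd hNd f L hquad G Gs hsharp_inner hsharp_norm γ hγ X0 X1
    hX1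
end
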